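/- Let S be a decision rule system with n(S) > 0. Then h_AD(S) ≤ d(S)·β_AD⁺(S) and h_SR(S) ≤ d(S)·β_SR⁺(S). -/

import Mathlib

/- Common formal framework for decision rule systems and decision trees /
   acyclic decision graphs, following Durdymyradov & Moshkov. -/

attribute [local instance] Classical.propDecidable

noncomputable section

namespace DRS

/-- A decision rule `(a_{i₁}=δ₁) ∧ ⋯ ∧ (a_{i_m}=δ_m) → σ`:
`K` is the finite set of equations (attribute index, value), `rhs` is σ. -/
structure Rule where
  K : Finset (ℕ × ℕ)
  rhs : ℕ

/-- Well-formedness of a rule: the attributes on its left-hand side are pairwise different. -/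
def Rule.WF (r : Rule) : Prop := ∀ p ∈ r.K, ∀ q ∈ r.K, p.1 = q.1 → p = q

/-- A(r): the set of attributes of a rule. -/
def Rule.attrs (r : Rule) : Finset ℕ := r.K.image Prod.fst

/-- The length m of a rule. -/
def Rule.len (r : Rule) : ℕ := r.K.card

/-- A(S) -/
def attrs (S : Finset Rule) : Finset ℕ := S.biUnion Rule.attrs

/-- n(S) -/
def nPar (S : Finset Rule) : ℕ := (attrs S).card

/-- d(S): the maximum length of a rule of S. -/
def dPar (S : Finset Rule) : ℕ := S.sup Rule.len

/-- D(S): the set of right-hand sides. -/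
def rhsSet (S : Finset Rule) : Finset ℕ := S.image Rule.rhs

/-- V_S(a_i) -/
def VS (S : Finset Rule) (i : ℕ) : Finset ℕ :=
  ((S.biUnion Rule.K).filter fun p => p.1 = i).image Prod.snd

/-- k(S) -/
def kPar (S : Finset Rule) : ℕ := (attrs S).sup fun i => (VS S i).card

/-- Attribute values in trees are `Option ℕ`; `none` plays the role of the special value `*`.
`allowed S false i` is (the lift of) `V_S(a_i)`, and `allowed S true i` is `EV_S(a_i)`. -/
def allowed (S : Finset Rule) (ext : Bool) (i : ℕ) : Finset (Option ℕ) :=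
  (VS S i).image some ∪ (if ext then {none} else ∅)

/-- Consistency of an equation system over ω ∪ {*}. -/
def ConsistentE (E : Finset (ℕ × Option ℕ)) : Prop :=
  ∀ p ∈ E, ∀ q ∈ E, p.1 = q.1 → p.2 = q.2

/-- Lift the left-hand side of a rule to an equation system over ω ∪ {*}. -/
def liftK (K : Finset (ℕ × ℕ)) : Finset (ℕ × Option ℕ) :=
  K.image fun p => (p.1, some p.2)

/-- A finite directed labeled graph: the nodes are `0, …, n-1`, with a distinguished root,
each node carries either an attribute (working node) or a set of rules (terminal node),
and edges are labeled with elements of ω ∪ {*}. -/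
structure DGraph where
  n : ℕ
  root : ℕ
  label : ℕ → ℕ ⊕ Finset Rule
  edges : Finset (ℕ × Option ℕ × ℕ)

namespace DGraph

def step (G : DGraph) (u v : ℕ) : Prop := ∃ l, (u, l, v) ∈ G.edges

/-- The graph has no directed cycles. -/
def Acyclic (G : DGraph) : Prop := ∀ v, ¬ Relation.TransGen G.step v v

/-- A node is terminal if no edge leaves it. -/
def IsTerminal (G : DGraph) (v : ℕ) : Prop := ∀ e ∈ G.edges, e.1 ≠ v

/-- The set of rules attached to a (terminal) node. -/
def termSet (G : DGraph) (v : ℕ) : Finset Rule :=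
  Sum.elim (fun _ => (∅ : Finset Rule)) id (G.label v)

/-- `G` is an acyclic decision graph over the rule system `S`;
`ext = false` : branching over `V_S` (o-type), `ext = true` : branching over `EV_S` (e-type).
Terminal nodes are labeled with subsets of S; each working node is labeled with an
attribute `a` of `A(S)` and has exactly one leaving edge for every element of
`V_S(a)` (resp. `EV_S(a)`), the edges leaving it being labeled with these
pairwise different elements. -/
def IsDG (G : DGraph) (S : Finset Rule) (ext : Bool) : Prop :=
  G.root < G.n ∧
  (∀ e ∈ G.edges, e.1 < G.n ∧ e.2.2 < G.n) ∧
  G.Acyclic ∧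
  (∀ v < G.n,
    if G.IsTerminal v then
      ∃ Z : Finset Rule, G.label v = Sum.inr Z ∧ Z ⊆ S
    else
      ∃ a : ℕ, G.label v = Sum.inl a ∧ a ∈ attrs S ∧
        (∀ l : Option ℕ, (∃ w, (v, l, w) ∈ G.edges) ↔ l ∈ allowed S ext a) ∧
        (∀ l w w', (v, l, w) ∈ G.edges → (v, l, w') ∈ G.edges → w = w'))

/-- `G` is a finite directed tree with root: the root has no entering edge and every
other node has exactly one entering edge (together with acyclicity this makes the
graph a rooted tree). -/
def IsTree (G : DGraph) : Prop :=
  (∀ e ∈ G.edges, e.2.2 ≠ G.root) ∧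
  (∀ v < G.n, v ≠ G.root → ∃! e, e ∈ G.edges ∧ e.2.2 = v)

/-- `chainFrom G v p t`: the list `p` of (node, leaving-edge-label) pairs forms a
directed path in `G` starting at `v` and ending at `t`. -/
def chainFrom (G : DGraph) : ℕ → List (ℕ × Option ℕ) → ℕ → Prop
  | v, [], t => v = t
  | v, e :: rest, t => e.1 = v ∧ ∃ w, (v, e.2, w) ∈ G.edges ∧ chainFrom G w rest t

/-- A complete path: from the root to a terminal node; it is recorded by the list of
its working nodes with the labels of the edges taken, together with its terminal node. -/
def IsCompletePath (G : DGraph) (p : List (ℕ × Option ℕ)) (t : ℕ) : Prop :=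
  G.chainFrom G.root p t ∧ G.IsTerminal t ∧ t < G.n

/-- K(ξ): the equation system associated with a complete path. -/
def pathEqs (G : DGraph) (p : List (ℕ × Option ℕ)) : Finset (ℕ × Option ℕ) :=
  (p.filterMap fun e =>
    Sum.elim (fun a => some (a, e.2)) (fun _ => none) (G.label e.1)).toFinset

/-- L(Γ): the number of nodes. -/
def size (G : DGraph) : ℕ := G.n

/-- T(Γ): the number of terminal nodes labeled with pairwise different sets of rules. -/
def tCount (G : DGraph) : ℕ :=
  (((Finset.range G.n).filter fun v => G.IsTerminal v).image fun v => G.termSet v).card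

/-- h(Γ): the maximum number of working nodes on a complete path. -/
def depth (G : DGraph) : ℕ :=
  sSup {m | ∃ p t, G.IsCompletePath p t ∧ p.length = m}

/-- Path conditions for (the solutions of) the problems All Rules / EAll Rules. -/
def SolvesAR (G : DGraph) (S : Finset Rule) : Prop :=
  ∀ p t, G.IsCompletePath p t → ConsistentE (G.pathEqs p) →
    (∀ r ∈ G.termSet t, liftK r.K ⊆ G.pathEqs p) ∧
    (∀ r ∈ S, r ∉ G.termSet t → ¬ ConsistentE (liftK r.K ∪ G.pathEqs p))

/-- Path conditions for the problems All Decisions / EAll Decisions. -/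
def SolvesAD (G : DGraph) (S : Finset Rule) : Prop :=
  ∀ p t, G.IsCompletePath p t → ConsistentE (G.pathEqs p) →
    (∀ r ∈ G.termSet t, liftK r.K ⊆ G.pathEqs p) ∧
    (∀ r ∈ S, r ∉ G.termSet t → r.rhs ∉ (G.termSet t).image Rule.rhs →
      ¬ ConsistentE (liftK r.K ∪ G.pathEqs p))

/-- Path conditions for the problems Some Rules / ESome Rules. -/
def SolvesSR (G : DGraph) (S : Finset Rule) : Prop :=
  ∀ p t, G.IsCompletePath p t → ConsistentE (G.pathEqs p) →
    (∀ r ∈ G.termSet t, liftK r.K ⊆ G.pathEqs p) ∧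
    (G.termSet t = ∅ → ∀ r ∈ S, ¬ ConsistentE (liftK r.K ∪ G.pathEqs p))

end DGraph

/-- Γ is a decision tree over S solving AR(S) (an o-tree). -/
def TreeSolvesAR (S : Finset Rule) (G : DGraph) : Prop :=
  G.IsDG S false ∧ G.IsTree ∧ G.SolvesAR S
/-- Γ is a decision tree over S solving EAR(S) (an e-tree). -/
def TreeSolvesEAR (S : Finset Rule) (G : DGraph) : Prop :=
  G.IsDG S true ∧ G.IsTree ∧ G.SolvesAR S
/-- Γ is a decision tree over S solving AD(S) (an o-tree). -/
def TreeSolvesAD (S : Finset Rule) (G : DGraph) : Prop :=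
  G.IsDG S false ∧ G.IsTree ∧ G.SolvesAD S
/-- Γ is a decision tree over S solving EAD(S) (an e-tree). -/
def TreeSolvesEAD (S : Finset Rule) (G : DGraph) : Prop :=
  G.IsDG S true ∧ G.IsTree ∧ G.SolvesAD S
/-- Γ is a decision tree over S solving SR(S) (an o-tree). -/
def TreeSolvesSR (S : Finset Rule) (G : DGraph) : Prop :=
  G.IsDG S false ∧ G.IsTree ∧ G.SolvesSR S
/-- Γ is a decision tree over S solving ESR(S) (an e-tree). -/
def TreeSolvesESR (S : Finset Rule) (G : DGraph) : Prop :=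
  G.IsDG S true ∧ G.IsTree ∧ G.SolvesSR S

/-- L_AR(S): minimum number of nodes of a decision tree over S solving AR(S). -/
def L_AR (S : Finset Rule) : ℕ := sInf {m | ∃ G : DGraph, TreeSolvesAR S G ∧ G.size = m}
def L_EAR (S : Finset Rule) : ℕ := sInf {m | ∃ G : DGraph, TreeSolvesEAR S G ∧ G.size = m}
def L_AD (S : Finset Rule) : ℕ := sInf {m | ∃ G : DGraph, TreeSolvesAD S G ∧ G.size = m}
def L_EAD (S : Finset Rule) : ℕ := sInf {m | ∃ G : DGraph, TreeSolvesEAD S G ∧ G.size = m}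
def L_SR (S : Finset Rule) : ℕ := sInf {m | ∃ G : DGraph, TreeSolvesSR S G ∧ G.size = m}
def L_ESR (S : Finset Rule) : ℕ := sInf {m | ∃ G : DGraph, TreeSolvesESR S G ∧ G.size = m}

/-- T_AR(S): minimum number of differently-labeled terminal nodes of a decision tree
over S solving AR(S); similarly for the other problems. -/
def T_AR (S : Finset Rule) : ℕ := sInf {m | ∃ G : DGraph, TreeSolvesAR S G ∧ G.tCount = m}
def T_EAR (S : Finset Rule) : ℕ := sInf {m | ∃ G : DGraph, TreeSolvesEAR S G ∧ G.tCount = m}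
def T_AD (S : Finset Rule) : ℕ := sInf {m | ∃ G : DGraph, TreeSolvesAD S G ∧ G.tCount = m}
def T_EAD (S : Finset Rule) : ℕ := sInf {m | ∃ G : DGraph, TreeSolvesEAD S G ∧ G.tCount = m}
def T_SR (S : Finset Rule) : ℕ := sInf {m | ∃ G : DGraph, TreeSolvesSR S G ∧ G.tCount = m}
def T_ESR (S : Finset Rule) : ℕ := sInf {m | ∃ G : DGraph, TreeSolvesESR S G ∧ G.tCount = m}

/-- h_AR(S): minimum depth of a decision tree over S solving AR(S); similarly for the others. -/
def h_AR (S : Finset Rule) : ℕ := sInf {m | ∃ G : DGraph, TreeSolvesAR S G ∧ G.depth = m}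
def h_EAR (S : Finset Rule) : ℕ := sInf {m | ∃ G : DGraph, TreeSolvesEAR S G ∧ G.depth = m}
def h_AD (S : Finset Rule) : ℕ := sInf {m | ∃ G : DGraph, TreeSolvesAD S G ∧ G.depth = m}
def h_EAD (S : Finset Rule) : ℕ := sInf {m | ∃ G : DGraph, TreeSolvesEAD S G ∧ G.depth = m}
def h_SR (S : Finset Rule) : ℕ := sInf {m | ∃ G : DGraph, TreeSolvesSR S G ∧ G.depth = m}
def h_ESR (S : Finset Rule) : ℕ := sInf {m | ∃ G : DGraph, TreeSolvesESR S G ∧ G.depth = m}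

/-- L^DG_SR(S): minimum number of nodes of an acyclic decision graph solving SR(S). -/
def LDG_SR (S : Finset Rule) : ℕ :=
  sInf {m | ∃ G : DGraph, G.IsDG S false ∧ G.SolvesSR S ∧ G.size = m}
/-- L^DG_ESR(S): minimum number of nodes of an acyclic decision graph solving ESR(S). -/
def LDG_ESR (S : Finset Rule) : ℕ :=
  sInf {m | ∃ G : DGraph, G.IsDG S true ∧ G.SolvesSR S ∧ G.size = m}

/-- A node cover of the hypergraph G(S). -/
def IsNodeCover (S : Finset Rule) (B : Finset ℕ) : Prop :=
  B ⊆ attrs S ∧ ∀ r ∈ S, (Rule.attrs r).Nonempty → (Rule.attrs r ∩ B).Nonempty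

/-- β(S): the minimum cardinality of a node cover of the hypergraph G(S). -/
def beta (S : Finset Rule) : ℕ := sInf {c | ∃ B, IsNodeCover S B ∧ B.card = c}

/-- S⁺: the subsystem of S consisting of all rules of length d(S). -/
def Splus (S : Finset Rule) : Finset Rule := S.filter fun r => r.len = dPar S

/-- β⁺(S) = β(S⁺). -/
def betaPlus (S : Finset Rule) : ℕ := beta (Splus S)

/-- The rule r_α : delete from the left-hand side of r all equations belonging to α. -/
def Rule.restrict (r : Rule) (α : Finset (ℕ × Option ℕ)) : Rule :=
  ⟨r.K.filter fun p => (p.1, some p.2) ∉ α, r.rhs⟩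

/-- S_α : the system of the rules r_α for all r ∈ S with K(r) ∪ α consistent. -/
def restrict (S : Finset Rule) (α : Finset (ℕ × Option ℕ)) : Finset Rule :=
  (S.filter fun r => ConsistentE (liftK r.K ∪ α)).image fun r => r.restrict α

/-- E_C(S): consistent equation systems whose attributes are in A(S) and whose
values belong to V_S (ext = false) resp. EV_S (ext = true). -/
def ESys (S : Finset Rule) (ext : Bool) : Set (Finset (ℕ × Option ℕ)) :=
  {α | ConsistentE α ∧ ∀ p ∈ α, p.1 ∈ attrs S ∧ p.2 ∈ allowed S ext p.1}

/-- I_SR(S). -/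
def I_SR (S : Finset Rule) : Finset Rule :=
  if ∃ r ∈ S, r.len = 0 then S.filter fun r => r.len = 0 else S

/-- D₀(S): the right-hand sides of the rules of S of length 0. -/
def D0 (S : Finset Rule) : Finset ℕ := (S.filter fun r => r.len = 0).image Rule.rhs

/-- I_AD(S). -/
def I_AD (S : Finset Rule) : Finset Rule :=
  S.filter fun r => r.len = 0 ∨ r.rhs ∉ D0 S

def betaC (S : Finset Rule) (ext : Bool) : ℕ :=
  sSup {b | ∃ α ∈ ESys S ext, beta (restrict S α) = b}
def betaCplus (S : Finset Rule) (ext : Bool) : ℕ :=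
  sSup {b | ∃ α ∈ ESys S ext, betaPlus (restrict S α) = b}
def betaI (S : Finset Rule) (I : Finset Rule → Finset Rule) : ℕ :=
  sSup {b | ∃ α ∈ ESys S true, beta (I (restrict S α)) = b}
def betaIplus (S : Finset Rule) (I : Finset Rule → Finset Rule) : ℕ :=
  sSup {b | ∃ α ∈ ESys S true, betaPlus (I (restrict S α)) = b}

def beta_AR (S : Finset Rule) : ℕ := betaC S false
def beta_AD (S : Finset Rule) : ℕ := betaC S false
def beta_SR (S : Finset Rule) : ℕ := betaC S false
def beta_EAR (S : Finset Rule) : ℕ := betaC S true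
def beta_ARplus (S : Finset Rule) : ℕ := betaCplus S false
def beta_ADplus (S : Finset Rule) : ℕ := betaCplus S false
def beta_SRplus (S : Finset Rule) : ℕ := betaCplus S false
def beta_EARplus (S : Finset Rule) : ℕ := betaCplus S true
def beta_EAD (S : Finset Rule) : ℕ := betaI S I_AD
def beta_EADplus (S : Finset Rule) : ℕ := betaIplus S I_AD
def beta_ESR (S : Finset Rule) : ℕ := betaI S I_SR
def beta_ESRplus (S : Finset Rule) : ℕ := betaIplus S I_SR

/-- R_SR(S). -/
def R_SR (S : Finset Rule) : Finset Rule :=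
  S.filter fun r => ¬ ∃ r' ∈ S, r'.K ⊂ r.K

/-- R_AD(S). -/
def R_AD (S : Finset Rule) : Finset Rule :=
  S.filter fun r => ¬ ∃ r' ∈ S, r'.K ⊂ r.K ∧ r'.rhs = r.rhs

/-- A reduced decision rule system. -/
def Reduced (S : Finset Rule) : Prop :=
  attrs S ⊆ Finset.range (nPar S + 1) ∧
  rhsSet S ⊆ Finset.range ((rhsSet S).card + 1) ∧
  (∀ i ∈ attrs S, VS S i ⊆ Finset.range (kPar S + 1)) ∧
  1 ≤ dPar S

/-- Length of the binary representation of a natural number. -/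
def bitLen (m : ℕ) : ℕ := max 1 (Nat.size m)

/-- The length of the word "(a⟨i⟩=⟨δ⟩)" encoding one equation. -/
def eqLen (p : ℕ × ℕ) : ℕ := 4 + bitLen p.1 + bitLen p.2

/-- The length of the word encoding one rule (with the "∧" signs and "→"). -/
def Rule.wordLen (r : Rule) : ℕ :=
  (∑ p ∈ r.K, eqLen p) + (r.K.card - 1) + 1 + bitLen r.rhs

/-- size(S): the length of the word representing S (with ";" separating the rules). -/
def sizeS (S : Finset Rule) : ℕ := (∑ r ∈ S, r.wordLen) + (S.card - 1)

/-!
The tree reads, block by block, the attributes of a minimum node cover of `(S_α)⁺`, where `α`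
is the equation system of the path so far. A block has at most `β_C⁺(S)` working nodes, and
after it every rule of maximal length in `S_α` has lost an equation, so `d(S_α)` drops by one.
After `d(S)` blocks every rule of `S_α` has an empty left-hand side, i.e. every rule consistent
with the path is realized by it. Labelling each leaf with the realized rules solves `AR(S)`, and
hence `AD(S)` and `SR(S)`.
-/

lemma ConsistentE.mono {E E' : Finset (ℕ × Option ℕ)} (h : E ⊆ E') (hE' : ConsistentE E') :
    ConsistentE E :=
  fun p hp q hq => hE' p (h hp) q (h hq)

lemma mem_liftK {K : Finset (ℕ × ℕ)} {p : ℕ × ℕ} (hp : p ∈ K) : (p.1, some p.2) ∈ liftK K :=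
  Finset.mem_image_of_mem _ hp

lemma mem_of_consistentE_liftK_union {K : Finset (ℕ × ℕ)} {α : Finset (ℕ × Option ℕ)}
    (hcons : ConsistentE (liftK K ∪ α)) {p : ℕ × ℕ} (hp : p ∈ K) {w : Option ℕ}
    (hw : (p.1, w) ∈ α) : (p.1, some p.2) ∈ α := by
  have hval : some p.2 = w :=
    hcons _ (Finset.mem_union_left _ (mem_liftK hp)) _ (Finset.mem_union_right _ hw) rfl
  rwa [hval]

lemma mem_restrict {S : Finset Rule} {α : Finset (ℕ × Option ℕ)} {r' : Rule} :
    r' ∈ restrict S α ↔ ∃ r ∈ S, ConsistentE (liftK r.K ∪ α) ∧ r.restrict α = r' := by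
  simp only [restrict, Finset.mem_image, Finset.mem_filter, and_assoc]

lemma Rule.mem_K_restrict {r : Rule} {α : Finset (ℕ × Option ℕ)} {p : ℕ × ℕ} :
    p ∈ (r.restrict α).K ↔ p ∈ r.K ∧ (p.1, some p.2) ∉ α :=
  Finset.mem_filter

lemma Rule.K_restrict_anti {r : Rule} {α α' : Finset (ℕ × Option ℕ)} (h : α ⊆ α') :
    (r.restrict α').K ⊆ (r.restrict α).K := fun _ hp =>
  have hp := Rule.mem_K_restrict.1 hp
  Rule.mem_K_restrict.2 ⟨hp.1, fun hα => hp.2 (h hα)⟩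

lemma attrs_mono : Monotone attrs := fun _ _ h => Finset.biUnion_subset_biUnion_of_subset_left _ h

lemma attrs_restrict_subset (S : Finset Rule) (α : Finset (ℕ × Option ℕ)) :
    attrs (restrict S α) ⊆ attrs S := by
  intro b hb
  obtain ⟨r', hr', hb⟩ := Finset.mem_biUnion.1 hb
  obtain ⟨r, hr, -, rfl⟩ := mem_restrict.1 hr'
  obtain ⟨p, hp, rfl⟩ := Finset.mem_image.1 hb
  exact Finset.mem_biUnion.2 ⟨r, hr, Finset.mem_image_of_mem _ (Rule.mem_K_restrict.1 hp).1⟩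

lemma notMem_of_mem_attrs_restrict {S : Finset Rule} {α : Finset (ℕ × Option ℕ)} {b : ℕ}
    (hb : b ∈ attrs (restrict S α)) (w : Option ℕ) : (b, w) ∉ α := by
  intro hw
  obtain ⟨r', hr', hb⟩ := Finset.mem_biUnion.1 hb
  obtain ⟨r, -, hcons, rfl⟩ := mem_restrict.1 hr'
  obtain ⟨p, hp, rfl⟩ := Finset.mem_image.1 hb
  have hpK := Rule.mem_K_restrict.1 hp
  exact hpK.2 (mem_of_consistentE_liftK_union hcons hpK.1 hw)

lemma VS_nonempty {S : Finset Rule} {a : ℕ} (ha : a ∈ attrs S) : (VS S a).Nonempty := by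
  obtain ⟨r, hr, ha⟩ := Finset.mem_biUnion.1 ha
  obtain ⟨p, hp, rfl⟩ := Finset.mem_image.1 ha
  exact ⟨p.2, Finset.mem_image.2
    ⟨p, Finset.mem_filter.2 ⟨Finset.mem_biUnion.2 ⟨r, hr, hp⟩, rfl⟩, rfl⟩⟩

lemma dPar_restrict_le (S : Finset Rule) (α : Finset (ℕ × Option ℕ)) :
    dPar (restrict S α) ≤ dPar S := by
  refine Finset.sup_le fun r' hr' => ?_
  obtain ⟨r, hr, -, rfl⟩ := mem_restrict.1 hr'
  exact (Finset.card_filter_le _ _).trans (Finset.le_sup (f := Rule.len) hr)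

lemma liftK_subset_of_dPar_restrict_eq_zero {S : Finset Rule} {α : Finset (ℕ × Option ℕ)}
    (hd : dPar (restrict S α) = 0) {r : Rule} (hr : r ∈ S)
    (hcons : ConsistentE (liftK r.K ∪ α)) : liftK r.K ⊆ α := by
  have hlen : (r.restrict α).len ≤ dPar (restrict S α) :=
    Finset.le_sup (mem_restrict.2 ⟨r, hr, hcons, rfl⟩)
  have hK : (r.restrict α).K = ∅ := Finset.card_eq_zero.1 (by rw [Rule.len] at hlen; omega)
  intro e he
  obtain ⟨p, hp, rfl⟩ := Finset.mem_image.1 he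
  by_contra hpα
  exact Finset.notMem_empty p (hK ▸ Rule.mem_K_restrict.2 ⟨hp, hpα⟩)

lemma insert_mem_ESys {S : Finset Rule} {α : Finset (ℕ × Option ℕ)} {b δ : ℕ}
    (hα : α ∈ ESys S false) (hb : b ∈ attrs S) (hδ : δ ∈ VS S b) (hfree : ∀ w, (b, w) ∉ α) :
    insert (b, some δ) α ∈ ESys S false := by
  refine ⟨?_, fun p hp => ?_⟩
  · rintro ⟨p₁, p₂⟩ hp ⟨q₁, q₂⟩ hq (rfl : p₁ = q₁)
    simp only [Finset.mem_insert, Prod.mk.injEq] at hp hq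
    rcases hp with ⟨rfl, rfl⟩ | hp <;> rcases hq with ⟨hq₁, rfl⟩ | hq
    · rfl
    · exact (hfree _ hq).elim
    · exact (hfree _ (hq₁ ▸ hp)).elim
    · exact hα.1 _ hp _ hq rfl
  · rcases Finset.mem_insert.1 hp with rfl | hp
    · exact ⟨hb, by simpa [allowed] using hδ⟩
    · exact hα.2 p hp

lemma isNodeCover_attrs (S : Finset Rule) : IsNodeCover S (attrs S) :=
  ⟨subset_rfl, fun r hr ⟨x, hx⟩ => ⟨x, Finset.mem_inter.2 ⟨hx, Finset.mem_biUnion.2 ⟨r, hr, hx⟩⟩⟩⟩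

lemma exists_isNodeCover_card_eq_beta (S : Finset Rule) :
    ∃ B, IsNodeCover S B ∧ B.card = beta S :=
  Nat.sInf_mem (s := {c | ∃ B, IsNodeCover S B ∧ B.card = c}) ⟨_, _, isNodeCover_attrs S, rfl⟩

lemma beta_le_card_attrs (S : Finset Rule) : beta S ≤ (attrs S).card :=
  Nat.sInf_le ⟨attrs S, isNodeCover_attrs S, rfl⟩

lemma betaPlus_restrict_le_betaCplus {S : Finset Rule} {ext : Bool} {α : Finset (ℕ × Option ℕ)}
    (hα : α ∈ ESys S ext) : betaPlus (restrict S α) ≤ betaCplus S ext := by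
  refine le_csSup ⟨nPar S, ?_⟩ ⟨α, hα, rfl⟩
  rintro _ ⟨α', -, rfl⟩
  exact (beta_le_card_attrs _).trans (Finset.card_le_card
    ((attrs_mono (Finset.filter_subset _ _)).trans (attrs_restrict_subset S α')))

lemma Rule.len_restrict_lt {r : Rule} {α α' : Finset (ℕ × Option ℕ)} (hsub : α ⊆ α')
    (hcons : ConsistentE (liftK r.K ∪ α')) {b : ℕ} (hb : b ∈ (r.restrict α).attrs)
    {w : Option ℕ} (hw : (b, w) ∈ α') : (r.restrict α').len < (r.restrict α).len := by
  obtain ⟨p, hp, rfl⟩ := Finset.mem_image.1 hb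
  have hpα' := mem_of_consistentE_liftK_union hcons (Rule.mem_K_restrict.1 hp).1 hw
  exact Finset.card_lt_card
    ⟨Rule.K_restrict_anti hsub, fun h => (Rule.mem_K_restrict.1 (h hp)).2 hpα'⟩

lemma dPar_restrict_le_pred {S : Finset Rule} {α α' : Finset (ℕ × Option ℕ)} {B : Finset ℕ}
    (hB : IsNodeCover (Splus (restrict S α)) B) (hsub : α ⊆ α')
    (hcov : ∀ b ∈ B, ∃ w, (b, w) ∈ α') :
    dPar (restrict S α') ≤ dPar (restrict S α) - 1 := by
  refine Finset.sup_le fun r' hr' => ?_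
  obtain ⟨r, hr, hcons, rfl⟩ := mem_restrict.1 hr'
  have hmem : r.restrict α ∈ restrict S α :=
    mem_restrict.2 ⟨r, hr, hcons.mono (Finset.union_subset_union_right hsub), rfl⟩
  have hle : (r.restrict α).len ≤ dPar (restrict S α) := Finset.le_sup hmem
  have hanti : (r.restrict α').len ≤ (r.restrict α).len :=
    Finset.card_le_card (Rule.K_restrict_anti hsub)
  by_cases hmax : (r.restrict α).len = dPar (restrict S α) ∧ 0 < (r.restrict α).len
  · obtain ⟨b, hb⟩ :=
      hB.2 _ (Finset.mem_filter.2 ⟨hmem, hmax.1⟩) ((Finset.card_pos.1 hmax.2).image _)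
    obtain ⟨w, hw⟩ := hcov b (Finset.mem_inter.1 hb).2
    have := Rule.len_restrict_lt hsub hcons (Finset.mem_inter.1 hb).1 hw
    omega
  · omega

namespace DGraph

lemma SolvesAR.solvesAD {G : DGraph} {S : Finset Rule} (h : G.SolvesAR S) : G.SolvesAD S :=
  fun p t hp hcons => ⟨(h p t hp hcons).1, fun r hr hrt _ => (h p t hp hcons).2 r hr hrt⟩

lemma SolvesAR.solvesSR {G : DGraph} {S : Finset Rule} (h : G.SolvesAR S) : G.SolvesSR S :=
  fun p t hp hcons => ⟨(h p t hp hcons).1, fun ht r hr => (h p t hp hcons).2 r hr (by simp [ht])⟩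

end DGraph

inductive DTree where
  | leaf : Finset Rule → DTree
  | node : ℕ → (ℕ → DTree) → DTree

namespace DTree

/-- A node is addressed by the (attribute, answer) pairs along the path to it from the root;
a node labelled `a` has one child for every answer in `V_S(a)`. -/
def paths (S : Finset Rule) : DTree → Finset (List (ℕ × Option ℕ))
  | leaf _ => {[]}
  | node a f => insert [] ((VS S a).biUnion fun δ => (paths S (f δ)).image ((a, some δ) :: ·))

def labelAt : DTree → List (ℕ × Option ℕ) → ℕ ⊕ Finset Rule
  | leaf Z, _ => .inr Z
  | node a _, [] => .inl a
  | node _ f, (_, some δ) :: h => labelAt (f δ) h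
  | node _ _, (_, none) :: _ => .inr ∅ -- junk: answers on paths are never `none`

def height (S : Finset Rule) : DTree → ℕ
  | leaf _ => 0
  | node a f => ((VS S a).sup fun δ => height S (f δ)) + 1

def IsOver (S : Finset Rule) : DTree → Prop
  | leaf Z => Z ⊆ S
  | node a f => a ∈ attrs S ∧ ∀ δ ∈ VS S a, IsOver S (f δ)

variable {S : Finset Rule} {t : DTree}

lemma nil_mem_paths (S : Finset Rule) (t : DTree) : [] ∈ paths S t := by
  cases t <;> simp [paths]

lemma mem_paths_leaf {Z : Finset Rule} {h : List (ℕ × Option ℕ)} :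
    h ∈ paths S (leaf Z) ↔ h = [] := by
  simp [paths]

lemma mem_paths_node {a : ℕ} {f : ℕ → DTree} {h : List (ℕ × Option ℕ)} :
    h ∈ paths S (node a f) ↔
      h = [] ∨ ∃ δ ∈ VS S a, ∃ g ∈ paths S (f δ), h = (a, some δ) :: g := by
  simp only [paths, Finset.mem_insert, Finset.mem_biUnion, Finset.mem_image]
  grind

lemma length_le_height {h : List (ℕ × Option ℕ)} (hh : h ∈ paths S t) :
    h.length ≤ height S t := by
  induction t generalizing h with
  | leaf Z => simp [mem_paths_leaf.1 hh]
  | node a f ih =>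
      rcases mem_paths_node.1 hh with rfl | ⟨δ, hδ, g, hg, rfl⟩
      · simp
      · simpa [height] using (ih δ hg).trans (Finset.le_sup (f := fun δ => height S (f δ)) hδ)

lemma append_mem_paths {h : List (ℕ × Option ℕ)} {a δ : ℕ} (hh : h ∈ paths S t)
    (hl : labelAt t h = .inl a) (hδ : δ ∈ VS S a) : h ++ [(a, some δ)] ∈ paths S t := by
  induction t generalizing h with
  | leaf Z => simp [labelAt] at hl
  | node b f ih =>
      rcases mem_paths_node.1 hh with rfl | ⟨δ', hδ', g, hg, rfl⟩
      · obtain rfl : b = a := by simpa [labelAt] using hl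
        exact mem_paths_node.2 (.inr ⟨δ, hδ, [], nil_mem_paths S (f δ), rfl⟩)
      · exact mem_paths_node.2 (.inr ⟨δ', hδ', _, ih δ' hg (by simpa [labelAt] using hl), rfl⟩)

lemma mem_paths_of_append {h : List (ℕ × Option ℕ)} {e : ℕ × Option ℕ}
    (hh : h ++ [e] ∈ paths S t) :
    h ∈ paths S t ∧ ∃ a δ, e = (a, some δ) ∧ labelAt t h = .inl a ∧ δ ∈ VS S a := by
  induction t generalizing h with
  | leaf Z => simp [mem_paths_leaf] at hh
  | node b f ih =>
      rcases mem_paths_node.1 hh with hnil | ⟨δ', hδ', g, hg, heq⟩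
      · simp at hnil
      · cases h with
        | nil =>
            obtain ⟨rfl, rfl⟩ := List.cons_eq_cons.1 heq.symm
            exact ⟨nil_mem_paths _ _, b, δ', rfl, rfl, hδ'⟩
        | cons x h =>
            obtain ⟨rfl, rfl⟩ := List.cons_eq_cons.1 heq
            obtain ⟨hmem, a, δ, rfl, hlab, hδ⟩ := ih δ' hg
            exact ⟨mem_paths_node.2 (.inr ⟨δ', hδ', h, hmem, rfl⟩), a, δ, rfl,
              by simpa [labelAt] using hlab, hδ⟩

lemma IsOver.mem_attrs {h : List (ℕ × Option ℕ)} {a : ℕ} (hw : t.IsOver S)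
    (hh : h ∈ paths S t) (hl : labelAt t h = .inl a) : a ∈ attrs S := by
  induction t generalizing h with
  | leaf Z => simp [labelAt] at hl
  | node b f ih =>
      rcases mem_paths_node.1 hh with rfl | ⟨δ, hδ, g, hg, rfl⟩
      · obtain rfl : b = a := by simpa [labelAt] using hl
        exact hw.1
      · exact ih δ (hw.2 δ hδ) hg (by simpa [labelAt] using hl)

lemma IsOver.subset {h : List (ℕ × Option ℕ)} {Z : Finset Rule} (hw : t.IsOver S)
    (hh : h ∈ paths S t) (hl : labelAt t h = .inr Z) : Z ⊆ S := by
  induction t generalizing h with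
  | leaf Z' =>
      obtain rfl : Z' = Z := by simpa [labelAt] using hl
      exact hw
  | node b f ih =>
      rcases mem_paths_node.1 hh with rfl | ⟨δ, hδ, g, hg, rfl⟩
      · simp [labelAt] at hl
      · exact ih δ (hw.2 δ hδ) hg (by simpa [labelAt] using hl)

variable (S t) in
def idx (h : List (ℕ × Option ℕ)) : ℕ :=
  if hh : h ∈ paths S t then (paths S t).equivFin ⟨h, hh⟩ else 0

variable (S t) in
def pathAt (v : ℕ) : List (ℕ × Option ℕ) :=
  if hv : v < (paths S t).card then (paths S t).equivFin.symm ⟨v, hv⟩ else []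

lemma idx_lt {h : List (ℕ × Option ℕ)} (hh : h ∈ paths S t) : idx S t h < (paths S t).card := by
  rw [idx, dif_pos hh]
  exact Fin.isLt _

lemma pathAt_idx {h : List (ℕ × Option ℕ)} (hh : h ∈ paths S t) : pathAt S t (idx S t h) = h := by
  simp [pathAt, idx, hh]

lemma pathAt_mem {v : ℕ} (hv : v < (paths S t).card) : pathAt S t v ∈ paths S t := by
  rw [pathAt, dif_pos hv]
  exact Subtype.property _

lemma idx_pathAt {v : ℕ} (hv : v < (paths S t).card) : idx S t (pathAt S t v) = v := by
  simp [idx, pathAt, hv]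

lemma idx_inj {h h' : List (ℕ × Option ℕ)} (hh : h ∈ paths S t) (hh' : h' ∈ paths S t)
    (he : idx S t h = idx S t h') : h = h' := by
  rw [← pathAt_idx hh, he, pathAt_idx hh']


variable (S t) in
def toDGraph : DGraph where
  n := (paths S t).card
  root := idx S t []
  label v := labelAt t (pathAt S t v)
  edges := (paths S t).biUnion fun h => Sum.elim
    (fun a => (VS S a).image fun δ => (idx S t h, some δ, idx S t (h ++ [(a, some δ)])))
    (fun _ => ∅) (labelAt t h)

lemma mem_edges_toDGraph {e : ℕ × Option ℕ × ℕ} :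
    e ∈ (toDGraph S t).edges ↔ ∃ h ∈ paths S t, ∃ a δ, labelAt t h = .inl a ∧ δ ∈ VS S a ∧
      e = (idx S t h, some δ, idx S t (h ++ [(a, some δ)])) := by
  simp only [toDGraph, Finset.mem_biUnion]
  refine exists_congr fun h => and_congr_right fun _ => ?_
  cases labelAt t h <;> simp [eq_comm]

lemma label_toDGraph_idx {h : List (ℕ × Option ℕ)} (hh : h ∈ paths S t) :
    (toDGraph S t).label (idx S t h) = labelAt t h := by
  simp only [toDGraph, pathAt_idx hh]

lemma isTerminal_toDGraph_idx_iff {h : List (ℕ × Option ℕ)} (hw : t.IsOver S)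
    (hh : h ∈ paths S t) :
    (toDGraph S t).IsTerminal (idx S t h) ↔ ∃ Z, labelAt t h = .inr Z := by
  constructor
  · intro hterm
    cases hl : labelAt t h with
    | inl a =>
        obtain ⟨δ, hδ⟩ := VS_nonempty (hw.mem_attrs hh hl)
        exact absurd rfl (hterm _ (mem_edges_toDGraph.2 ⟨h, hh, a, δ, hl, hδ, rfl⟩))
    | inr Z => exact ⟨Z, rfl⟩
  · rintro ⟨Z, hl⟩ e he hsrc
    obtain ⟨h', hh', a, δ, hl', -, rfl⟩ := mem_edges_toDGraph.1 he
    rw [idx_inj hh' hh hsrc, hl] at hl'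
    cases hl'

lemma toDGraph_acyclic : (toDGraph S t).Acyclic := by
  have hstep : ∀ u v, (toDGraph S t).step u v →
      (pathAt S t u).length < (pathAt S t v).length := by
    rintro u v ⟨l, he⟩
    obtain ⟨h, hh, a, δ, hl, hδ, he⟩ := mem_edges_toDGraph.1 he
    simp only [Prod.mk.injEq] at he
    obtain ⟨rfl, -, rfl⟩ := he
    rw [pathAt_idx hh, pathAt_idx (append_mem_paths hh hl hδ)]
    simp
  intro v hv
  have key : ∀ u w, Relation.TransGen (toDGraph S t).step u w →
      (pathAt S t u).length < (pathAt S t w).length := fun u w huw =>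
    Relation.TransGen.trans_induction_on huw (hstep _ _) fun _ _ => lt_trans
  exact lt_irrefl _ (key v v hv)

lemma exists_edge_toDGraph_iff {h : List (ℕ × Option ℕ)} {a : ℕ} (hh : h ∈ paths S t)
    (hl : labelAt t h = .inl a) (l : Option ℕ) :
    (∃ w, (idx S t h, l, w) ∈ (toDGraph S t).edges) ↔ l ∈ allowed S false a := by
  simp only [allowed, Bool.false_eq_true, if_false, Finset.union_empty, Finset.mem_image]
  constructor
  · rintro ⟨w, he⟩
    obtain ⟨h', hh', a', δ, hl', hδ, he⟩ := mem_edges_toDGraph.1 he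
    simp only [Prod.mk.injEq] at he
    obtain rfl := idx_inj hh hh' he.1
    obtain rfl : a = a' := Sum.inl.inj (hl.symm.trans hl')
    exact ⟨δ, hδ, he.2.1.symm⟩
  · rintro ⟨δ, hδ, rfl⟩
    exact ⟨_, mem_edges_toDGraph.2 ⟨h, hh, a, δ, hl, hδ, rfl⟩⟩

lemma eq_of_mem_edges_toDGraph {v w w' : ℕ} {l : Option ℕ} (he : (v, l, w) ∈ (toDGraph S t).edges)
    (he' : (v, l, w') ∈ (toDGraph S t).edges) : w = w' := by
  obtain ⟨h, hh, a, δ, hl, -, he⟩ := mem_edges_toDGraph.1 he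
  obtain ⟨h', hh', a', δ', hl', -, he'⟩ := mem_edges_toDGraph.1 he'
  simp only [Prod.mk.injEq] at he he'
  obtain rfl := idx_inj hh hh' (he.1.symm.trans he'.1)
  obtain rfl : a = a' := Sum.inl.inj (hl.symm.trans hl')
  obtain rfl : δ = δ' := Option.some.inj (he.2.1.symm.trans he'.2.1)
  exact he.2.2.trans he'.2.2.symm

lemma isDG_toDGraph (hw : t.IsOver S) : (toDGraph S t).IsDG S false := by
  refine ⟨idx_lt (nil_mem_paths S t), ?_, toDGraph_acyclic, fun v hv => ?_⟩
  · intro e he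
    obtain ⟨h, hh, a, δ, hl, hδ, rfl⟩ := mem_edges_toDGraph.1 he
    exact ⟨idx_lt hh, idx_lt (append_mem_paths hh hl hδ)⟩
  have hm := pathAt_mem hv
  have hterm := isTerminal_toDGraph_idx_iff hw hm
  rw [idx_pathAt hv] at hterm
  split_ifs with hT
  · obtain ⟨Z, hZ⟩ := hterm.1 hT
    exact ⟨Z, hZ, hw.subset hm hZ⟩
  · cases hl : labelAt t (pathAt S t v) with
    | inr Z => exact absurd (hterm.2 ⟨Z, hl⟩) hT
    | inl a =>
        refine ⟨a, hl, hw.mem_attrs hm hl, fun l => ?_, fun l w w' => eq_of_mem_edges_toDGraph⟩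
        simpa only [idx_pathAt hv] using exists_edge_toDGraph_iff hm hl l

lemma isTree_toDGraph : (toDGraph S t).IsTree := by
  refine ⟨fun e he hroot => ?_, fun v hv hne => ?_⟩
  · obtain ⟨h, hh, a, δ, hl, hδ, rfl⟩ := mem_edges_toDGraph.1 he
    simpa using idx_inj (append_mem_paths hh hl hδ) (nil_mem_paths S t) hroot
  have hm := pathAt_mem hv
  obtain ⟨g, x, hgx⟩ := (List.eq_nil_or_concat' (pathAt S t v)).resolve_left fun hnil =>
    hne (by rw [← idx_pathAt hv, hnil]; rfl)
  obtain ⟨hg, a, δ, rfl, hl, hδ⟩ := mem_paths_of_append (hgx ▸ hm)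
  have hv' : idx S t (g ++ [(a, some δ)]) = v := by rw [← hgx, idx_pathAt hv]
  refine ⟨(idx S t g, some δ, v), ⟨mem_edges_toDGraph.2 ⟨g, hg, a, δ, hl, hδ, by rw [hv']⟩, rfl⟩,
    fun e ⟨he, hev⟩ => ?_⟩
  obtain ⟨g', hg', a', δ', hl', hδ', rfl⟩ := mem_edges_toDGraph.1 he
  have hpath := idx_inj (append_mem_paths hg' hl' hδ') (append_mem_paths hg hl hδ)
    (hev.trans hv'.symm)
  obtain ⟨rfl, hx⟩ := List.append_singleton_inj.1 hpath
  simp only [Prod.mk.injEq] at hx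
  rw [hx.2, ← hv', ← hx.1]

lemma chainFrom_toDGraph (p : List (ℕ × Option ℕ)) {h : List (ℕ × Option ℕ)} (hh : h ∈ paths S t)
    {w : ℕ} (hch : (toDGraph S t).chainFrom (idx S t h) p w) :
    ∃ g, h ++ g ∈ paths S t ∧ w = idx S t (h ++ g) ∧ g.length = p.length ∧
      p.filterMap (fun e => Sum.elim (fun a => some (a, e.2)) (fun _ => none)
        ((toDGraph S t).label e.1)) = g := by
  induction p generalizing h with
  | nil => exact ⟨[], by simpa using hh, by simpa using hch.symm, rfl, rfl⟩
  | cons e p ih =>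
      obtain ⟨he₁, w₁, hedge, hrest⟩ := hch
      obtain ⟨h₀, hh₀, a, δ, hl, hδ, hedge⟩ := mem_edges_toDGraph.1 hedge
      simp only [Prod.mk.injEq] at hedge
      obtain ⟨hsrc, hlabel, rfl⟩ := hedge
      obtain rfl := idx_inj hh₀ hh hsrc.symm
      obtain ⟨g, hg, rfl, hlen, hg'⟩ := ih (append_mem_paths hh₀ hl hδ) hrest
      refine ⟨(a, some δ) :: g, by simpa using hg, by simp, by simp [hlen], ?_⟩
      rw [List.filterMap_cons, he₁, label_toDGraph_idx hh₀, hl, Sum.elim_inl, hlabel, hg']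

lemma depth_toDGraph_le : (toDGraph S t).depth ≤ height S t := by
  refine csSup_le' ?_
  rintro _ ⟨p, v, ⟨hch, -, -⟩, rfl⟩
  obtain ⟨g, hg, -, hlen, -⟩ := chainFrom_toDGraph p (nil_mem_paths S t) hch
  rw [List.nil_append] at hg
  exact hlen ▸ length_le_height hg

lemma IsOver.isCompletePath_toDGraph (hw : t.IsOver S) {p : List (ℕ × Option ℕ)} {v : ℕ}
    (hp : (toDGraph S t).IsCompletePath p v) :
    ∃ g ∈ paths S t, ∃ Z, labelAt t g = .inr Z ∧ (toDGraph S t).termSet v = Z ∧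
      (toDGraph S t).pathEqs p = g.toFinset := by
  obtain ⟨hch, hterm, -⟩ := hp
  obtain ⟨g, hg, rfl, -, hpe⟩ := chainFrom_toDGraph p (nil_mem_paths S t) hch
  rw [List.nil_append] at hg ⊢
  obtain ⟨Z, hZ⟩ := (isTerminal_toDGraph_idx_iff hw hg).1 hterm
  refine ⟨g, hg, Z, hZ, ?_, by rw [DGraph.pathEqs, hpe]⟩
  simp only [DGraph.termSet, label_toDGraph_idx hg, hZ, Sum.elim_inr, id]

end DTree

section Construction

open DTree

def maxCover (S : Finset Rule) (α : Finset (ℕ × Option ℕ)) : Finset ℕ :=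
  (exists_isNodeCover_card_eq_beta (Splus (restrict S α))).choose

lemma isNodeCover_maxCover (S : Finset Rule) (α : Finset (ℕ × Option ℕ)) :
    IsNodeCover (Splus (restrict S α)) (maxCover S α) :=
  (exists_isNodeCover_card_eq_beta _).choose_spec.1

lemma card_maxCover (S : Finset Rule) (α : Finset (ℕ × Option ℕ)) :
    (maxCover S α).card = betaPlus (restrict S α) :=
  (exists_isNodeCover_card_eq_beta _).choose_spec.2

lemma maxCover_subset_attrs_restrict (S : Finset Rule) (α : Finset (ℕ × Option ℕ)) :
    maxCover S α ⊆ attrs (restrict S α) :=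
  (isNodeCover_maxCover S α).1.trans (attrs_mono (Finset.filter_subset _ _))

def realized (S : Finset Rule) (α : Finset (ℕ × Option ℕ)) : Finset Rule :=
  S.filter fun r => liftK r.K ⊆ α

def queryAll (next : Finset (ℕ × Option ℕ) → DTree) :
    List ℕ → Finset (ℕ × Option ℕ) → DTree
  | [], α => next α
  | b :: L, α => .node b fun δ => queryAll next L (insert (b, some δ) α)

def build (S : Finset Rule) : ℕ → Finset (ℕ × Option ℕ) → DTree
  | 0, α => .leaf (realized S α)
  | k + 1, α => queryAll (build S k) (maxCover S α).toList α

lemma isOver_queryAll {S : Finset Rule} {next : Finset (ℕ × Option ℕ) → DTree} {L : List ℕ}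
    {α : Finset (ℕ × Option ℕ)} (hL : ∀ b ∈ L, b ∈ attrs S) (hnext : ∀ α', (next α').IsOver S) :
    (queryAll next L α).IsOver S := by
  induction L generalizing α with
  | nil => exact hnext α
  | cons b L ih =>
      exact ⟨hL b List.mem_cons_self, fun _ _ => ih fun b' hb' => hL b' (.tail _ hb')⟩

lemma isOver_build (S : Finset Rule) (k : ℕ) (α : Finset (ℕ × Option ℕ)) :
    (build S k α).IsOver S := by
  induction k generalizing α with
  | zero => exact Finset.filter_subset _ _
  | succ k ih =>
      exact isOver_queryAll (fun b hb => attrs_restrict_subset S α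
        (maxCover_subset_attrs_restrict S α (Finset.mem_toList.1 hb))) ih

def LeavesRealized (S : Finset Rule) (t : DTree) (α : Finset (ℕ × Option ℕ)) : Prop :=
  ∀ h ∈ paths S t, ∀ Z, labelAt t h = .inr Z →
    Z = realized S (α ∪ h.toFinset) ∧ dPar (restrict S (α ∪ h.toFinset)) = 0

lemma leavesRealized_queryAll {S : Finset Rule} {next : Finset (ℕ × Option ℕ) → DTree}
    {L : List ℕ} {α : Finset (ℕ × Option ℕ)}
    (H : ∀ α', α ⊆ α' → (∀ b ∈ L, ∃ w, (b, w) ∈ α') → LeavesRealized S (next α') α') :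
    LeavesRealized S (queryAll next L α) α := by
  induction L generalizing α with
  | nil => exact H α subset_rfl (by simp)
  | cons b L ih =>
      intro h hh Z hZ
      rcases mem_paths_node.1 hh with rfl | ⟨δ, -, g, hg, rfl⟩
      · simp [queryAll, labelAt] at hZ
      have H' : ∀ α', insert (b, some δ) α ⊆ α' → (∀ b' ∈ L, ∃ w, (b', w) ∈ α') →
          LeavesRealized S (next α') α' := fun α' hsub hcov =>
        H α' ((Finset.subset_insert _ _).trans hsub) fun b' hb' =>
          (List.mem_cons.1 hb').elim (fun hb => hb ▸ ⟨_, hsub (Finset.mem_insert_self _ _)⟩)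
            (hcov b')
      have heq : insert (b, some δ) α ∪ g.toFinset = α ∪ ((b, some δ) :: g).toFinset := by
        rw [List.toFinset_cons, Finset.insert_union, Finset.union_insert]
      simpa only [heq] using ih H' g hg Z hZ

lemma leavesRealized_build (S : Finset Rule) (k : ℕ) (α : Finset (ℕ × Option ℕ))
    (hk : dPar (restrict S α) ≤ k) : LeavesRealized S (build S k α) α := by
  induction k generalizing α with
  | zero =>
      intro h hh Z hZ
      obtain rfl := mem_paths_leaf.1 hh
      obtain rfl : realized S α = Z := by simpa [build, labelAt] using hZ
      simpa using hk
  | succ k ih =>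
      refine leavesRealized_queryAll fun α' hsub hcov => ih α' ?_
      have := dPar_restrict_le_pred (isNodeCover_maxCover S α) hsub
        fun b hb => hcov b (Finset.mem_toList.2 hb)
      omega

lemma height_queryAll_le {S : Finset Rule} {next : Finset (ℕ × Option ℕ) → DTree} {D : ℕ}
    (hnext : ∀ α ∈ ESys S false, height S (next α) ≤ D) {L : List ℕ} (hnd : L.Nodup)
    {α : Finset (ℕ × Option ℕ)} (hα : α ∈ ESys S false) (hL : ∀ b ∈ L, b ∈ attrs S)
    (hfree : ∀ b ∈ L, ∀ w, (b, w) ∉ α) :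
    height S (queryAll next L α) ≤ L.length + D := by
  induction L generalizing α with
  | nil => simpa [queryAll] using hnext α hα
  | cons b L ih =>
      obtain ⟨hbL, hnd⟩ := List.nodup_cons.1 hnd
      suffices ∀ δ ∈ VS S b, height S (queryAll next L (insert (b, some δ) α)) ≤ L.length + D by
        simpa [queryAll, height, add_right_comm _ 1] using Finset.sup_le this
      refine fun δ hδ => ih hnd
        (insert_mem_ESys hα (hL b List.mem_cons_self) hδ (hfree b List.mem_cons_self))
        (fun b' hb' => hL b' (.tail _ hb')) fun b' hb' w hw => ?_
      rcases Finset.mem_insert.1 hw with hw | hw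
      · obtain rfl : b' = b := congrArg Prod.fst hw
        exact hbL hb'
      · exact hfree b' (.tail _ hb') w hw

lemma height_build_le (S : Finset Rule) (k : ℕ) {α : Finset (ℕ × Option ℕ)}
    (hα : α ∈ ESys S false) : height S (build S k α) ≤ k * betaCplus S false := by
  induction k generalizing α with
  | zero => simp [build, height]
  | succ k ih =>
      have hmem : ∀ b ∈ (maxCover S α).toList, b ∈ attrs (restrict S α) := fun b hb =>
        maxCover_subset_attrs_restrict S α (Finset.mem_toList.1 hb)
      have hlen : (maxCover S α).toList.length ≤ betaCplus S false := by
        rw [Finset.length_toList, card_maxCover]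
        exact betaPlus_restrict_le_betaCplus hα
      have := height_queryAll_le (next := build S k) (fun _ hα' => ih hα')
        (Finset.nodup_toList _) hα
        (fun b hb => attrs_restrict_subset S α (hmem b hb))
        fun b hb => notMem_of_mem_attrs_restrict (hmem b hb)
      rw [build, add_mul, one_mul]
      omega

end Construction

theorem exists_treeSolvesAR_depth_le (S : Finset Rule) :
    ∃ G : DGraph, TreeSolvesAR S G ∧ G.depth ≤ dPar S * betaCplus S false := by
  have hover := isOver_build S (dPar S) ∅
  have hempty : (∅ : Finset (ℕ × Option ℕ)) ∈ ESys S false := by simp [ESys, ConsistentE]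
  refine ⟨DTree.toDGraph S (build S (dPar S) ∅), ⟨DTree.isDG_toDGraph hover,
    DTree.isTree_toDGraph, fun p v hp _ => ?_⟩,
    DTree.depth_toDGraph_le.trans (height_build_le S _ hempty)⟩
  obtain ⟨g, hg, Z, hZ, hterm, hpe⟩ := hover.isCompletePath_toDGraph hp
  obtain ⟨rfl, hd⟩ := leavesRealized_build S (dPar S) ∅ (dPar_restrict_le S ∅) g hg Z hZ
  rw [Finset.empty_union] at hd
  rw [hterm, hpe, Finset.empty_union]
  exact ⟨fun r hr => (Finset.mem_filter.1 hr).2, fun r hr hrZ hcons =>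
    hrZ (Finset.mem_filter.2 ⟨hr, liftK_subset_of_dPar_restrict_eq_zero hd hr hcons⟩)⟩

theorem statement_17_general (S : Finset Rule) :
    h_AD S ≤ dPar S * beta_ADplus S ∧ h_SR S ≤ dPar S * beta_SRplus S := by
  obtain ⟨G, ⟨hDG, hTree, hAR⟩, hdepth⟩ := exists_treeSolvesAR_depth_le S
  exact ⟨le_trans (Nat.sInf_le ⟨G, ⟨hDG, hTree, hAR.solvesAD⟩, rfl⟩) hdepth,
    le_trans (Nat.sInf_le ⟨G, ⟨hDG, hTree, hAR.solvesSR⟩, rfl⟩) hdepth⟩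

/-- Theorem 4(c),(e): h_AD(S) ≤ d(S)·β_AD⁺(S) and h_SR(S) ≤ d(S)·β_SR⁺(S). -/
theorem statement_17 (S : Finset Rule) (hS : S.Nonempty) (hwf : ∀ r ∈ S, r.WF)
    (hn : 0 < nPar S) :
    h_AD S ≤ dPar S * beta_ADplus S ∧ h_SR S ≤ dPar S * beta_SRplus S :=
  statement_17_general S

end DRS

end
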